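/- Let N ∈ ℕ be given. Then there is a martingale f = (f_n) adapted to the filtration (Σ_n) with the following properties: (a) f_1 = … = f_N = 0; (b) f is L^p-bounded for each p ∈ [1, ∞), i.e. sup_n ‖f_n‖_{L^p} < ∞ for each such p; (c) the set {x ∈ K : lim_{n→∞} f_n(x) = +∞} is dense in K; (d) the set {x ∈ K : lim_{n→∞} f_n(x) = −∞} is dense in K. -/

import Mathlib

open MeasureTheory Filter Set
open scoped ENNReal Topology

noncomputable section

namespace MartingalePaper

variable {Ω : Type}

/-- The discrete topology on `Set Ω`; each finite partition `D n` thus carries the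
discrete topology, and `ℕ → Set Ω` the product topology. -/
instance : TopologicalSpace (Set Ω) := ⊥

/-- `(D n)` is a sequence of finite measurable partitions of `Ω`, each refined by the next. -/
def IsPartitionSeq [MeasurableSpace Ω] (D : ℕ → Finset (Set Ω)) : Prop :=
  (∀ n, ∀ A ∈ D n, MeasurableSet A) ∧
  (∀ n, ∀ A ∈ D n, A.Nonempty) ∧
  (∀ n, (D n : Set (Set Ω)).PairwiseDisjoint id) ∧
  (∀ n, ⋃ A ∈ D n, A = (Set.univ : Set Ω)) ∧
  (∀ n, ∀ A ∈ D (n + 1), ∃ B ∈ D n, A ⊆ B)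

/-- Standing Assumptions (A). -/
def AssumptionA [MeasurableSpace Ω] (P : Measure Ω) (D : ℕ → Finset (Set Ω)) : Prop :=
  (∀ n, ∀ A ∈ D n, 0 < P A) ∧ (∀ n, ∀ A ∈ D n, ∃ m, n < m ∧ A ∉ D m)

/-- The compact metrizable space `K` associated to the filtration: decreasing chains of atoms. -/
abbrev Kt (D : ℕ → Finset (Set Ω)) : Type _ :=
  {x : ℕ → Set Ω // (∀ n, x n ∈ D n) ∧ ∀ n m : ℕ, n ≤ m → x m ⊆ x n}

/-- The function on `Ω` determined by the values `f n A` on the atoms `A ∈ D n`. -/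
def mval (D : ℕ → Finset (Set Ω)) (f : ℕ → Set Ω → ℝ) (n : ℕ) (w : Ω) : ℝ :=
  ∑ A ∈ D n, A.indicator (fun _ => f n A) w

/-- A martingale adapted to the filtration `(σ(D n))`, in its canonical representation by
the (a.e. constant) values on the atoms:  `f n A` is the value of the `n`-th function on
the atom `A ∈ D n`. -/
def IsMart [MeasurableSpace Ω] (P : Measure Ω) (D : ℕ → Finset (Set Ω))
    (f : ℕ → Set Ω → ℝ) : Prop :=
  (∀ n, ∀ A : Set Ω, A ∉ D n → f n A = 0) ∧
  ∀ n m : ℕ, n ≤ m → ∀ A ∈ D n,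
    ∫ w in A, mval D f n w ∂P = ∫ w in A, mval D f m w ∂P

/-- `‖f_n‖_{L^p}`. -/
def lpNorm [MeasurableSpace Ω] (P : Measure Ω) (D : ℕ → Finset (Set Ω)) (p : ℝ≥0∞)
    (f : ℕ → Set Ω → ℝ) (n : ℕ) : ℝ≥0∞ :=
  eLpNorm (mval D f n) p P

/-- `‖f‖_p = sup_n ‖f_n‖_{L^p}`. -/
def martNorm [MeasurableSpace Ω] (P : Measure Ω) (D : ℕ → Finset (Set Ω)) (p : ℝ≥0∞)
    (f : ℕ → Set Ω → ℝ) : ℝ≥0∞ :=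
  ⨆ n, lpNorm P D p f n

/-- `M_p`, the space of `L^p`-bounded martingales adapted to the filtration. -/
def Mart [MeasurableSpace Ω] (P : Measure Ω) (D : ℕ → Finset (Set Ω)) (p : ℝ≥0∞) : Type _ :=
  {f : ℕ → Set Ω → ℝ // IsMart P D f ∧ martNorm P D p f ≠ ∞}

/-- The norm topology on `M_p`: the topology generated by the balls of the norm `‖·‖_p`
(which is exactly the topology of this metric). -/
instance [MeasurableSpace Ω] (P : Measure Ω) (D : ℕ → Finset (Set Ω)) (p : ℝ≥0∞) :
    TopologicalSpace (Mart P D p) :=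
  TopologicalSpace.generateFrom
    {s | ∃ (f : Mart P D p) (ε : ℝ≥0∞), 0 < ε ∧
      s = {g : Mart P D p | martNorm P D p (fun k A => g.1 k A - f.1 k A) < ε}}

/-- `limsup f_n(x) = +∞` and `liminf f_n(x) = -∞`. -/
def DivergesAt (D : ℕ → Finset (Set Ω)) (f : ℕ → Set Ω → ℝ) (x : Kt D) : Prop :=
  Filter.limsup (fun n => ((f n (x.1 n) : ℝ) : EReal)) Filter.atTop = ⊤ ∧
  Filter.liminf (fun n => ((f n (x.1 n) : ℝ) : EReal)) Filter.atTop = ⊥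

/-!
Pass to sparse levels `level D N k` between which every atom splits. Requirement `t` (an atom
to be visited and a sign `ε t`) receives a seed atom `a t` of level `level D N t` and, from stage
`t + 1` on, a chain of atoms, each the lighter subatom of the previous one; at every stage the
chains of different requirements are disjoint, and the `k`-th atom of a chain has mass at most
`2⁻ᵏ`. At time `i` the requirement `owner i` contributes the increment `ε (1_T - ρ 1_{S \ T})`,
where `S` is its `i`-th chain atom, `T` the next one and `ρ ≤ 1` is chosen so that the mean over
`S` vanishes; `f_n` is the average of the first `n` increments on the atoms of level `n`.

Mean zero on atoms coarser than `S` gives the martingale property and `f_n = 0` for `n ≤ N`,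
and the summable masses of the supports bound every `L^p` norm. Along the point of `K` cut out
by the chain of `t`, increments of other requirements vanish, and those of `t` are eventually
`ε t` each and never of the opposite sign, so `f_n → ε t · ∞` there; every cylinder of `K`
contains such points of both signs.
-/

open Classical

section Partition

variable [MeasurableSpace Ω] {D : ℕ → Finset (Set Ω)} {n m k : ℕ} {A B : Set Ω}

namespace IsPartitionSeq

variable (hD : IsPartitionSeq D)
include hD

lemma measurableSet (hA : A ∈ D n) : MeasurableSet A := hD.1 n A hA

lemma nonempty (hA : A ∈ D n) : A.Nonempty := hD.2.1 n A hA

lemma disjoint_of_ne (hA : A ∈ D n) (hB : B ∈ D n) (h : A ≠ B) : Disjoint A B :=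
  hD.2.2.1 n hA hB h

lemma eq_of_not_disjoint (hA : A ∈ D n) (hB : B ∈ D n) (h : ¬Disjoint A B) : A = B := by
  by_contra hne
  exact h (hD.disjoint_of_ne hA hB hne)

lemma eq_of_subset_of_subset (hA : A ∈ D n) (hB : B ∈ D m) (hnm : n = m) {X : Set Ω}
    (hX : X.Nonempty) (hXA : X ⊆ A) (hXB : X ⊆ B) : A = B := by
  subst hnm
  obtain ⟨w, hw⟩ := hX
  exact hD.eq_of_not_disjoint hA hB (Set.not_disjoint_iff.2 ⟨w, hXA hw, hXB hw⟩)

lemma exists_mem (n : ℕ) (w : Ω) : ∃ A ∈ D n, w ∈ A := by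
  have hw : w ∈ ⋃ A ∈ D n, A := hD.2.2.2.1 n ▸ Set.mem_univ w
  simpa using hw

lemma exists_superset (h : n ≤ m) (hB : B ∈ D m) : ∃ A ∈ D n, B ⊆ A := by
  induction m, h using Nat.le_induction generalizing B with
  | base => exact ⟨B, hB, subset_rfl⟩
  | succ m _ ih =>
    obtain ⟨C, hC, hBC⟩ := hD.2.2.2.2 m B hB
    obtain ⟨A, hA, hCA⟩ := ih hC
    exact ⟨A, hA, hBC.trans hCA⟩

lemma subset_or_disjoint (h : n ≤ m) (hA : A ∈ D n) (hB : B ∈ D m) : B ⊆ A ∨ Disjoint A B := by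
  obtain ⟨A', hA', hBA'⟩ := hD.exists_superset h hB
  by_cases hAA' : Disjoint A A'
  · exact Or.inr (hAA'.mono_right hBA')
  · exact Or.inl (hD.eq_of_not_disjoint hA hA' hAA' ▸ hBA')

lemma subset_of_not_disjoint (h : n ≤ m) (hA : A ∈ D n) (hB : B ∈ D m) (hAB : ¬Disjoint A B) :
    B ⊆ A :=
  (hD.subset_or_disjoint h hA hB).resolve_right hAB

lemma exists_subset (h : n ≤ m) (hA : A ∈ D n) : ∃ B ∈ D m, B ⊆ A := by
  obtain ⟨w, hw⟩ := hD.nonempty hA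
  obtain ⟨B, hB, hwB⟩ := hD.exists_mem m w
  exact ⟨B, hB, hD.subset_of_not_disjoint h hA hB (Set.not_disjoint_iff.2 ⟨w, hw, hwB⟩)⟩

lemma mem_of_le_of_le (hnm : n ≤ m) (hmk : m ≤ k) (hA : A ∈ D n) (hA' : A ∈ D k) : A ∈ D m := by
  obtain ⟨B, hB, hAB⟩ := hD.exists_superset hmk hA'
  have hBA : B ⊆ A := hD.subset_of_not_disjoint hnm hA hB
    (Set.not_disjoint_iff.2 (by obtain ⟨w, hw⟩ := hD.nonempty hA; exact ⟨w, hw, hAB hw⟩))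
  exact (hAB.antisymm hBA).symm ▸ hB

lemma biUnion_subatoms (h : n ≤ m) (hA : A ∈ D n) : ⋃ B ∈ (D m).filter (· ⊆ A), B = A := by
  refine subset_antisymm (by simp) fun w hw => ?_
  obtain ⟨B, hB, hwB⟩ := hD.exists_mem m w
  have hBA := hD.subset_of_not_disjoint h hA hB (Set.not_disjoint_iff.2 ⟨w, hw, hwB⟩)
  exact Set.mem_biUnion (Finset.mem_filter.2 ⟨hB, hBA⟩) hwB

lemma pairwiseDisjoint_subatoms (m : ℕ) (A : Set Ω) :
    (((D m).filter (· ⊆ A) : Finset (Set Ω)) : Set (Set Ω)).PairwiseDisjoint id :=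
  (hD.2.2.1 m).subset fun _ hB => (Finset.mem_filter.1 hB).1

lemma exists_ne_of_notMem (h : n ≤ m) (hA : A ∈ D n) (hAm : A ∉ D m) :
    ∃ B₁ ∈ D m, B₁ ⊆ A ∧ ∃ B₂ ∈ D m, B₂ ⊆ A ∧ B₁ ≠ B₂ := by
  obtain ⟨B₁, hB₁, hB₁A⟩ := hD.exists_subset h hA
  obtain ⟨w, hwA, hwB₁⟩ : ∃ w ∈ A, w ∉ B₁ :=
    Set.not_subset.1 fun hAB₁ => hAm (hB₁A.antisymm hAB₁ ▸ hB₁)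
  obtain ⟨B₂, hB₂, hwB₂⟩ := hD.exists_mem m w
  refine ⟨B₁, hB₁, hB₁A, B₂, hB₂, ?_, fun h => hwB₁ (h ▸ hwB₂)⟩
  exact hD.subset_of_not_disjoint h hA hB₂ (Set.not_disjoint_iff.2 ⟨w, hwA, hwB₂⟩)

lemma setIntegral_eq_sum_subatoms {P : Measure Ω} {g : Ω → ℝ} (hg : Integrable g P)
    (h : n ≤ m) (hA : A ∈ D n) :
    ∫ w in A, g w ∂P = ∑ B ∈ (D m).filter (· ⊆ A), ∫ w in B, g w ∂P := by
  conv_lhs => rw [← hD.biUnion_subatoms h hA]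
  exact integral_biUnion_finset _ (fun B hB => hD.measurableSet (Finset.mem_filter.1 hB).1)
    (hD.pairwiseDisjoint_subatoms m A) fun B _ => hg.integrableOn

end IsPartitionSeq

end Partition

section Points

variable [MeasurableSpace Ω] {D : ℕ → Finset (Set Ω)} {n m : ℕ}

lemma Kt.apply_eq_of_le (hD : IsPartitionSeq D) {x y : Kt D} (h : x.1 m = y.1 m) (hnm : n ≤ m) :
    x.1 n = y.1 n := by
  obtain ⟨w, hw⟩ := hD.nonempty (x.2.1 m)
  refine hD.eq_of_not_disjoint (x.2.1 n) (y.2.1 n) (Set.not_disjoint_iff.2 ⟨w, ?_, ?_⟩)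
  · exact x.2.2 n m hnm hw
  · exact y.2.2 n m hnm (h ▸ hw)

lemma dense_of_forall_exists_eq (hD : IsPartitionSeq D) {s : Set (Kt D)}
    (h : ∀ (x : Kt D) (m : ℕ), ∃ y ∈ s, y.1 m = x.1 m) : Dense s := by
  refine dense_iff_inter_open.2 fun U hU ⟨x, hxU⟩ => ?_
  obtain ⟨V, hV, rfl⟩ := isOpen_induced_iff.1 hU
  obtain ⟨I, u, hIu, hIV⟩ := isOpen_pi_iff.1 hV x.1 hxU
  obtain ⟨y, hys, hyx⟩ := h x (I.sup id)
  refine ⟨y, hIV fun i hi => ?_, hys⟩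
  rw [Kt.apply_eq_of_le hD hyx (n := i) (Finset.le_sup (f := id) hi)]
  exact (hIu i hi).2

lemma exists_kt_of_antitone (hD : IsPartitionSeq D) {c : ℕ → Set Ω} {ℓ : ℕ → ℕ}
    (hc : ∀ k, c k ∈ D (ℓ k)) (hanti : Antitone c) (hℓ : ∀ k, k ≤ ℓ k) :
    ∃ x : Kt D, ∀ n k, (n ≤ ℓ k → c k ⊆ x.1 n) ∧ (ℓ k ≤ n → x.1 n ⊆ c k) := by
  choose X hX hcX using fun n => hD.exists_superset (hℓ n) (hc n)
  have hmeet : ∀ n k, ¬Disjoint (X n) (c k) := fun n k => by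
    obtain ⟨w, hw⟩ := hD.nonempty (hc (max n k))
    exact Set.not_disjoint_iff.2
      ⟨w, hcX n (hanti (le_max_left n k) hw), hanti (le_max_right n k) hw⟩
  have hsub : ∀ n k, n ≤ ℓ k → c k ⊆ X n := fun n k h =>
    hD.subset_of_not_disjoint h (hX n) (hc k) (hmeet n k)
  refine ⟨⟨X, hX, fun n m h => ?_⟩, fun n k => ⟨hsub n k, fun h => ?_⟩⟩
  · obtain ⟨w, hw⟩ := hD.nonempty (hc m)
    refine hD.subset_of_not_disjoint h (hX n) (hX m) (Set.not_disjoint_iff.2 ⟨w, ?_, hcX m hw⟩)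
    exact hsub n m (h.trans (hℓ m)) hw
  · exact hD.subset_of_not_disjoint h (hc k) (hX n) fun hd => hmeet n k hd.symm

end Points

section Increments

variable [MeasurableSpace Ω] {P : Measure Ω} {D : ℕ → Finset (Set Ω)} {n m k : ℕ}
  {A S : Set Ω} {g : Ω → ℝ}

structure IsCenteredBump (P : Measure Ω) (D : ℕ → Finset (Set Ω)) (k : ℕ) (S : Set Ω)
    (g : Ω → ℝ) : Prop where
  mem : S ∈ D k
  integrable : Integrable g P
  eq_zero_of_notMem : ∀ w ∉ S, g w = 0
  setIntegral_eq_zero : ∫ w in S, g w ∂P = 0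
  abs_le_one : ∀ w, |g w| ≤ 1

namespace IsCenteredBump

variable (hg : IsCenteredBump P D k S g)
include hg

lemma setIntegral_eq_zero_of_disjoint (hAS : Disjoint A S) : ∫ w in A, g w ∂P = 0 :=
  setIntegral_eq_zero_of_forall_eq_zero fun w hw =>
    hg.eq_zero_of_notMem w (hAS.notMem_of_mem_left hw)

lemma setIntegral_eq_zero_of_le (hD : IsPartitionSeq D) (hA : A ∈ D n) (h : n ≤ k) :
    ∫ w in A, g w ∂P = 0 := by
  rcases hD.subset_or_disjoint h hA hg.mem with hSA | hAS
  · rw [setIntegral_eq_of_subset_of_forall_sdiff_eq_zero (hD.measurableSet hA) hSA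
      fun w hw => hg.eq_zero_of_notMem w hw.2]
    exact hg.setIntegral_eq_zero
  · exact hg.setIntegral_eq_zero_of_disjoint hAS

lemma abs_setAverage_le_one [IsFiniteMeasure P] (A : Set Ω) : |⨍ w in A, g w ∂P| ≤ 1 := by
  have h : ‖∫ w in A, g w ∂P‖ ≤ 1 * P.real A :=
    norm_setIntegral_le_of_norm_le_const (measure_lt_top P A) fun w _ => hg.abs_le_one w
  rw [setAverage_eq, smul_eq_mul, abs_mul, abs_inv, abs_of_nonneg measureReal_nonneg,
    inv_mul_eq_div]
  exact div_le_one_of_le₀ (by simpa using h) measureReal_nonneg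

lemma abs_setAverage_le_indicator [IsFiniteMeasure P] (hD : IsPartitionSeq D) (hA : A ∈ D n)
    {w : Ω} (hw : w ∈ A) : |⨍ v in A, g v ∂P| ≤ S.indicator (fun _ => 1) w := by
  by_cases hAS : A ⊆ S
  · rw [Set.indicator_of_mem (hAS hw)]
    exact hg.abs_setAverage_le_one A
  · have h0 : ∫ v in A, g v ∂P = 0 := by
      rcases le_total n k with h | h
      · exact hg.setIntegral_eq_zero_of_le hD hA h
      · exact hg.setIntegral_eq_zero_of_disjoint
          ((hD.subset_or_disjoint h hg.mem hA).resolve_left hAS).symm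
    rw [setAverage_eq, h0, smul_zero, abs_zero]
    exact Set.indicator_nonneg (fun _ _ => zero_le_one) w

end IsCenteredBump

lemma mval_eq_of_mem (hD : IsPartitionSeq D) (f : ℕ → Set Ω → ℝ) (hA : A ∈ D n) {w : Ω}
    (hw : w ∈ A) : mval D f n w = f n A := by
  rw [mval, Finset.sum_eq_single_of_mem A hA fun B hB hBA => Set.indicator_of_notMem
    (fun hwB => hBA (hD.eq_of_not_disjoint hB hA (Set.not_disjoint_iff.2 ⟨w, hwB, hw⟩))) _,
    Set.indicator_of_mem hw]

lemma setIntegral_mval [IsFiniteMeasure P] (hD : IsPartitionSeq D) (f : ℕ → Set Ω → ℝ)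
    (h : n ≤ m) (hA : A ∈ D n) :
    ∫ w in A, mval D f m w ∂P = ∑ B ∈ (D m).filter (· ⊆ A), P.real B * f m B := by
  unfold mval
  rw [integral_finsetSum _ fun B hB =>
      ((integrable_const (f m B)).indicator (hD.measurableSet hB)).restrict,
    Finset.sum_filter]
  refine Finset.sum_congr rfl fun B hB => ?_
  rw [setIntegral_indicator (hD.measurableSet hB), setIntegral_const, smul_eq_mul]
  rcases hD.subset_or_disjoint h hA hB with hBA | hAB
  · rw [if_pos hBA, Set.inter_eq_right.2 hBA]
  · rw [if_neg fun hBA => (hD.nonempty hB).ne_empty (hAB.eq_bot_of_ge hBA), hAB.inter_eq,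
      measureReal_empty, zero_mul]

end Increments

section IncrementMart

variable [MeasurableSpace Ω] {P : Measure Ω} {D : ℕ → Finset (Set Ω)} {n m : ℕ} {A : Set Ω}
  {d : ℕ → Ω → ℝ} {k : ℕ → ℕ} {S : ℕ → Set Ω}

variable (P D) in
/-- The martingale `f_n = E[d_0 + ⋯ + d_{n-1} | Σ_n]`, by its values on the atoms. -/
def incrementMart (d : ℕ → Ω → ℝ) (n : ℕ) (A : Set Ω) : ℝ :=
  if A ∈ D n then ∑ i ∈ Finset.range n, ⨍ w in A, d i w ∂P else 0

lemma incrementMart_eq_zero (hD : IsPartitionSeq D)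
    (hd : ∀ i, IsCenteredBump P D (k i) (S i) (d i)) (h : ∀ i < n, n ≤ k i) (A : Set Ω) :
    incrementMart P D d n A = 0 := by
  unfold incrementMart
  split_ifs with hA
  · refine Finset.sum_eq_zero fun i hi => ?_
    rw [setAverage_eq, (hd i).setIntegral_eq_zero_of_le hD hA (h i (Finset.mem_range.1 hi)),
      smul_zero]
  · rfl

variable [IsFiniteMeasure P]

lemma setIntegral_mval_incrementMart (hD : IsPartitionSeq D) (hd : ∀ i, Integrable (d i) P)
    (h : n ≤ m) (hA : A ∈ D n) :
    ∫ w in A, mval D (incrementMart P D d) m w ∂P = ∑ i ∈ Finset.range m, ∫ w in A, d i w ∂P := by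
  rw [setIntegral_mval hD _ h hA]
  calc ∑ B ∈ (D m).filter (· ⊆ A), P.real B * incrementMart P D d m B
      = ∑ B ∈ (D m).filter (· ⊆ A), ∑ i ∈ Finset.range m, ∫ w in B, d i w ∂P := by
        refine Finset.sum_congr rfl fun B hB => ?_
        rw [incrementMart, if_pos (Finset.mem_filter.1 hB).1, Finset.mul_sum]
        exact Finset.sum_congr rfl fun i _ => measure_smul_setAverage _ (measure_ne_top P B)
    _ = ∑ i ∈ Finset.range m, ∫ w in A, d i w ∂P := by
        rw [Finset.sum_comm]
        exact Finset.sum_congr rfl fun i _ => (hD.setIntegral_eq_sum_subatoms (hd i) h hA).symm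

lemma isMart_incrementMart (hD : IsPartitionSeq D)
    (hd : ∀ i, IsCenteredBump P D (k i) (S i) (d i)) (hk : ∀ i, i ≤ k i) :
    IsMart P D (incrementMart P D d) := by
  refine ⟨fun n A hA => if_neg hA, fun n m h A hA => ?_⟩
  rw [setIntegral_mval_incrementMart hD (fun i => (hd i).integrable) le_rfl hA,
    setIntegral_mval_incrementMart hD (fun i => (hd i).integrable) h hA]
  refine Finset.sum_subset (Finset.range_subset_range.2 h) fun i _ hi => ?_
  exact (hd i).setIntegral_eq_zero_of_le hD hA
    ((not_lt.1 (Finset.mem_range.not.1 hi)).trans (hk i))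

lemma eLpNorm_mval_incrementMart_le (hD : IsPartitionSeq D)
    (hd : ∀ i, IsCenteredBump P D (k i) (S i) (d i)) {p : ℝ≥0∞} (hp : 1 ≤ p) (hp' : p ≠ ∞)
    (n : ℕ) :
    eLpNorm (mval D (incrementMart P D d) n) p P ≤
      ∑ i ∈ Finset.range n, P (S i) ^ (1 / p.toReal) := by
  have hbound : ∀ w, ‖mval D (incrementMart P D d) n w‖ ≤
      (∑ i ∈ Finset.range n, (S i).indicator fun _ => (1 : ℝ)) w := by
    intro w
    obtain ⟨A, hA, hw⟩ := hD.exists_mem n w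
    rw [mval_eq_of_mem hD _ hA hw, incrementMart, if_pos hA, Finset.sum_apply, Real.norm_eq_abs]
    exact (Finset.abs_sum_le_sum_abs _ _).trans
      (Finset.sum_le_sum fun i _ => (hd i).abs_setAverage_le_indicator hD hA hw)
  have hS : ∀ i, MeasurableSet (S i) := fun i => hD.measurableSet (hd i).mem
  refine (eLpNorm_mono_real hbound).trans <| (eLpNorm_sum_le (fun i _ =>
    (measurable_const.indicator (hS i)).aestronglyMeasurable) hp).trans_eq ?_
  refine Finset.sum_congr rfl fun i _ => ?_
  rw [eLpNorm_indicator_const (hS i) (zero_lt_one.trans_le hp).ne' hp', enorm_one, one_mul]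

lemma martNorm_incrementMart_le (hD : IsPartitionSeq D)
    (hd : ∀ i, IsCenteredBump P D (k i) (S i) (d i)) {p : ℝ≥0∞} (hp : 1 ≤ p) (hp' : p ≠ ∞) :
    martNorm P D p (incrementMart P D d) ≤ ∑' i, P (S i) ^ (1 / p.toReal) :=
  iSup_le fun n => (eLpNorm_mval_incrementMart_le hD hd hp hp' n).trans (ENNReal.sum_le_tsum _)

end IncrementMart

section Bump

variable [MeasurableSpace Ω] {P : Measure Ω} {A S T : Set Ω}

variable (P) in
/-- `1` on `T` and, on `S \ T`, the constant that makes the mean over `S` vanish. -/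
def bump (S T : Set Ω) (w : Ω) : ℝ :=
  T.indicator (fun _ => 1) w - P.real T / P.real (S \ T) * (S \ T).indicator (fun _ => 1) w

lemma bump_eq_zero_of_notMem (hTS : T ⊆ S) {w : Ω} (hw : w ∉ S) : bump P S T w = 0 := by
  simp [bump, Set.indicator_of_notMem (fun h => hw (hTS h)), Set.indicator_of_notMem
    (fun h : w ∈ S \ T => hw h.1)]

variable [IsFiniteMeasure P]

lemma measureReal_le_of_le_diff (hsmall : P T ≤ P (S \ T)) : P.real T ≤ P.real (S \ T) :=
  ENNReal.toReal_mono (measure_ne_top P _) hsmall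

lemma abs_bump_le_one (hsmall : P T ≤ P (S \ T)) (w : Ω) : |bump P S T w| ≤ 1 := by
  have hρ0 : 0 ≤ P.real T / P.real (S \ T) := div_nonneg measureReal_nonneg measureReal_nonneg
  have hρ1 : P.real T / P.real (S \ T) ≤ 1 :=
    div_le_one_of_le₀ (measureReal_le_of_le_diff hsmall) measureReal_nonneg
  unfold bump
  by_cases hT : w ∈ T
  · have : w ∉ S \ T := fun h => h.2 hT
    simp [hT, this]
  · by_cases hST : w ∈ S \ T
    · simp only [Set.indicator_of_notMem hT, Set.indicator_of_mem hST]
      rw [abs_le]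
      constructor <;> linarith
    · simp [hT, hST]

lemma integrable_bump (hS : MeasurableSet S) (hT : MeasurableSet T) :
    Integrable (bump P S T) P :=
  ((integrable_const _).indicator hT).sub
    (((integrable_const _).indicator (hS.diff hT)).const_mul _)

lemma setIntegral_bump (hS : MeasurableSet S) (hT : MeasurableSet T) (A : Set Ω) :
    ∫ w in A, bump P S T w ∂P =
      P.real (A ∩ T) - P.real T / P.real (S \ T) * P.real (A ∩ (S \ T)) := by
  unfold bump
  rw [integral_sub ((integrable_const _).indicator hT).restrict
      (((integrable_const _).indicator (hS.diff hT)).const_mul _).restrict,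
    integral_const_mul, setIntegral_indicator hT, setIntegral_indicator (hS.diff hT),
    setIntegral_const, setIntegral_const, smul_eq_mul, smul_eq_mul, mul_one, mul_one]

lemma setIntegral_bump_of_subset (hS : MeasurableSet S) (hT : MeasurableSet T) (hAT : A ⊆ T) :
    ∫ w in A, bump P S T w ∂P = P.real A := by
  rw [setIntegral_bump hS hT A, Set.inter_eq_left.2 hAT,
    Set.disjoint_iff_inter_eq_empty.1 (Set.disjoint_sdiff_right.mono_left hAT),
    measureReal_empty, mul_zero, sub_zero]

lemma setIntegral_bump_nonneg (hS : MeasurableSet S) (hT : MeasurableSet T) (hTA : T ⊆ A)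
    (hsmall : P T ≤ P (S \ T)) : 0 ≤ ∫ w in A, bump P S T w ∂P := by
  rw [setIntegral_bump hS hT A, Set.inter_eq_right.2 hTA]
  have hmono : P.real (A ∩ (S \ T)) ≤ P.real (S \ T) := measureReal_mono Set.inter_subset_right
  rcases (measureReal_nonneg (μ := P) (s := S \ T)).eq_or_lt with h0 | hpos
  · have : P.real T = 0 := le_antisymm (h0 ▸ measureReal_le_of_le_diff hsmall) measureReal_nonneg
    simp [this]
  · refine sub_nonneg.2 (le_of_le_of_eq ?_ (div_mul_cancel₀ (P.real T) hpos.ne'))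
    exact mul_le_mul_of_nonneg_left hmono (div_nonneg measureReal_nonneg hpos.le)

lemma setIntegral_bump_self (hS : MeasurableSet S) (hT : MeasurableSet T) (hTS : T ⊆ S)
    (hsmall : P T ≤ P (S \ T)) : ∫ w in S, bump P S T w ∂P = 0 := by
  refine le_antisymm ?_ (setIntegral_bump_nonneg hS hT hTS hsmall)
  rw [setIntegral_bump hS hT S, Set.inter_eq_right.2 hTS,
    Set.inter_eq_right.2 Set.sdiff_subset, sub_nonpos]
  rcases (measureReal_nonneg (μ := P) (s := S \ T)).eq_or_lt with h0 | hpos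
  · rw [← h0, div_zero, zero_mul, h0]
    exact measureReal_le_of_le_diff hsmall
  · rw [div_mul_cancel₀ _ hpos.ne']

lemma isCenteredBump_const_mul_bump {D : ℕ → Finset (Set Ω)} {k : ℕ} (hD : IsPartitionSeq D)
    (hS : S ∈ D k) (hT : MeasurableSet T) (hTS : T ⊆ S) (hsmall : P T ≤ P (S \ T)) {c : ℝ}
    (hc : |c| ≤ 1) : IsCenteredBump P D k S fun w => c * bump P S T w where
  mem := hS
  integrable := (integrable_bump (hD.measurableSet hS) hT).const_mul c
  eq_zero_of_notMem w hw := by rw [bump_eq_zero_of_notMem hTS hw, mul_zero]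
  setIntegral_eq_zero := by
    rw [integral_const_mul, setIntegral_bump_self (hD.measurableSet hS) hT hTS hsmall, mul_zero]
  abs_le_one w := by
    rw [abs_mul]
    exact mul_le_one₀ hc (abs_nonneg _) (abs_bump_le_one hsmall w)

end Bump

section Construction

variable [MeasurableSpace Ω] {P : Measure Ω} {D : ℕ → Finset (Set Ω)} {n m : ℕ} {A : Set Ω}

lemma AssumptionA.exists_notMem (hD : IsPartitionSeq D) (hP : AssumptionA P D) (n : ℕ) :
    ∃ m, n < m ∧ ∀ A ∈ D n, A ∉ D m := by
  choose! M hnM hM using hP.2 n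
  refine ⟨(D n).sup M + n + 1, by omega, fun A hA hA' => hM A hA ?_⟩
  refine hD.mem_of_le_of_le (hnM A hA).le ?_ hA hA'
  have := Finset.le_sup (f := M) hA
  omega

variable (D) in
def splitLevel (n : ℕ) : ℕ := sInf {m | n < m ∧ ∀ A ∈ D n, A ∉ D m}

lemma splitLevel_spec (hD : IsPartitionSeq D) (hP : AssumptionA P D) (n : ℕ) :
    n < splitLevel D n ∧ ∀ A ∈ D n, A ∉ D (splitLevel D n) :=
  Nat.sInf_mem (hP.exists_notMem hD n)

variable (D) in
def level (N : ℕ) : ℕ → ℕ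
  | 0 => N + 1
  | k + 1 => splitLevel D (level N k)

section Level

variable {N : ℕ} (hD : IsPartitionSeq D) (hP : AssumptionA P D)
include hD hP

lemma strictMono_level : StrictMono (level D N) :=
  strictMono_nat_of_lt_succ fun k => (splitLevel_spec hD hP (level D N k)).1

lemma add_lt_level (k : ℕ) : k + N < level D N k := by
  induction k with
  | zero => simp [level]
  | succ k ih =>
    have : level D N k < level D N (k + 1) := strictMono_level hD hP k.lt_succ_self
    omega

lemma notMem_level_succ {k : ℕ} (hA : A ∈ D (level D N k)) : A ∉ D (level D N (k + 1)) :=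
  (splitLevel_spec hD hP _).2 A hA

end Level

variable (P D) in
def smallSubatom (m : ℕ) (A : Set Ω) : Set Ω :=
  Classical.epsilon fun B => B ∈ D m ∧ B ⊆ A ∧ P B ≤ P (A \ B)

variable (P D) in
def otherSubatom (m : ℕ) (A : Set Ω) : Set Ω :=
  Classical.epsilon fun B => B ∈ D m ∧ B ⊆ A ∧ B ≠ smallSubatom P D m A

section Subatom

variable (hD : IsPartitionSeq D) (h : n ≤ m) (hA : A ∈ D n) (hAm : A ∉ D m)
include hD h hA hAm

lemma smallSubatom_spec :
    smallSubatom P D m A ∈ D m ∧ smallSubatom P D m A ⊆ A ∧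
      P (smallSubatom P D m A) ≤ P (A \ smallSubatom P D m A) := by
  refine Classical.epsilon_spec (p := fun B => B ∈ D m ∧ B ⊆ A ∧ P B ≤ P (A \ B)) ?_
  obtain ⟨B₁, hB₁, hB₁A, B₂, hB₂, hB₂A, hne⟩ := hD.exists_ne_of_notMem h hA hAm
  have key : ∀ {B B'}, B ∈ D m → B' ∈ D m → B' ⊆ A → B ≠ B' → P B ≤ P B' → P B ≤ P (A \ B) :=
    fun hB hB' hB'A hne hle => hle.trans <| measure_mono fun w hw =>
      ⟨hB'A hw, fun hwB => (hD.disjoint_of_ne hB hB' hne).notMem_of_mem_left hwB hw⟩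
  rcases le_total (P B₁) (P B₂) with hle | hle
  · exact ⟨B₁, hB₁, hB₁A, key hB₁ hB₂ hB₂A hne hle⟩
  · exact ⟨B₂, hB₂, hB₂A, key hB₂ hB₁ hB₁A hne.symm hle⟩

lemma otherSubatom_spec :
    otherSubatom P D m A ∈ D m ∧ otherSubatom P D m A ⊆ A ∧
      otherSubatom P D m A ≠ smallSubatom P D m A := by
  refine Classical.epsilon_spec
    (p := fun B => B ∈ D m ∧ B ⊆ A ∧ B ≠ smallSubatom P D m A) ?_
  obtain ⟨B₁, hB₁, hB₁A, B₂, hB₂, hB₂A, hne⟩ := hD.exists_ne_of_notMem h hA hAm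
  by_cases h₁ : B₁ = smallSubatom P D m A
  · exact ⟨B₂, hB₂, hB₂A, fun h₂ => hne (h₁.trans h₂.symm)⟩
  · exact ⟨B₁, hB₁, hB₁A, h₁⟩

end Subatom

lemma measure_le_inv_two_mul {B : Set Ω} (hB : MeasurableSet B) (hBA : B ⊆ A)
    (h : P B ≤ P (A \ B)) : P B ≤ 2⁻¹ * P A := by
  have hA : P A = P B + P (A \ B) := by
    rw [← measure_inter_add_sdiff A hB, Set.inter_eq_right.2 hBA]
  calc P B = 2⁻¹ * (2 * P B) := by
        rw [← mul_assoc, ENNReal.inv_mul_cancel two_ne_zero ENNReal.ofNat_ne_top, one_mul]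
    _ ≤ 2⁻¹ * P A := by rw [hA, two_mul]; gcongr

variable (P D) in
def chain (N : ℕ) (a : ℕ → Set Ω) (t : ℕ) : ℕ → Set Ω
  | 0 => otherSubatom P D (level D N (t + 1)) (a t)
  | k + 1 => smallSubatom P D (level D N (t + k + 2)) (chain N a t k)

section Chain

variable {N : ℕ} {a : ℕ → Set Ω} (hD : IsPartitionSeq D) (hP : AssumptionA P D)
  (ha : ∀ t, a t ∈ D (level D N t))
include hD hP ha

lemma chain_zero_spec (t : ℕ) :
    chain P D N a t 0 ∈ D (level D N (t + 1)) ∧ chain P D N a t 0 ⊆ a t ∧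
      chain P D N a t 0 ≠ smallSubatom P D (level D N (t + 1)) (a t) :=
  otherSubatom_spec hD ((strictMono_level hD hP).monotone t.le_succ) (ha t)
    (notMem_level_succ hD hP (ha t))

lemma chain_mem (t k : ℕ) : chain P D N a t k ∈ D (level D N (t + k + 1)) := by
  induction k with
  | zero => exact (chain_zero_spec hD hP ha t).1
  | succ k ih =>
    exact (smallSubatom_spec hD ((strictMono_level hD hP).monotone (Nat.le_succ _)) ih
      (notMem_level_succ hD hP ih)).1

lemma chain_succ_spec (t k : ℕ) :
    chain P D N a t (k + 1) ⊆ chain P D N a t k ∧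
      P (chain P D N a t (k + 1)) ≤ P (chain P D N a t k \ chain P D N a t (k + 1)) :=
  have h := chain_mem hD hP ha t k
  (smallSubatom_spec hD ((strictMono_level hD hP).monotone (Nat.le_succ _)) h
    (notMem_level_succ hD hP h)).2

lemma antitone_chain (t : ℕ) : Antitone (chain P D N a t) :=
  antitone_nat_of_succ_le fun k => (chain_succ_spec hD hP ha t k).1

lemma measure_chain_le [IsProbabilityMeasure P] (t k : ℕ) : P (chain P D N a t k) ≤ 2⁻¹ ^ k := by
  induction k with
  | zero => rw [pow_zero]; exact prob_le_one
  | succ k ih =>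
    rw [pow_succ']
    exact (measure_le_inv_two_mul (hD.measurableSet (chain_mem hD hP ha t (k + 1)))
      (chain_succ_spec hD hP ha t k).1 (chain_succ_spec hD hP ha t k).2).trans (by gcongr)

/-- Both atoms have level `level D N (s + d + l + 2)`. A chain starts at `otherSubatom` of its
seed, so it avoids the continuation `smallSubatom` of any earlier chain through that seed. -/
lemma chain_ne_of_lt (s d l : ℕ) :
    chain P D N a s (d + 1 + l) ≠ chain P D N a (s + 1 + d) l := by
  induction l with
  | zero =>
    intro heq
    obtain ⟨hX, hXa, hne⟩ := chain_zero_spec hD hP ha (s + 1 + d)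
    have hpar : chain P D N a s d = a (s + 1 + d) :=
      hD.eq_of_subset_of_subset (chain_mem hD hP ha s d) (ha _) (congrArg _ (by omega))
        (hD.nonempty hX) (heq ▸ (chain_succ_spec hD hP ha s d).1) hXa
    refine hne (heq.symm.trans ?_)
    change smallSubatom P D (level D N (s + d + 2)) (chain P D N a s d) = _
    rw [hpar, show s + d + 2 = s + 1 + d + 1 by omega]
  | succ l ih =>
    intro heq
    refine ih (hD.eq_of_subset_of_subset (chain_mem hD hP ha s _) (chain_mem hD hP ha _ l)
      (congrArg _ (by omega)) (hD.nonempty (chain_mem hD hP ha _ (l + 1))) ?_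
      (chain_succ_spec hD hP ha _ l).1)
    exact heq ▸ (chain_succ_spec hD hP ha s (d + 1 + l)).1

lemma disjoint_chain {s t k l : ℕ} (hst : s ≠ t) (h : s + k = t + l) :
    Disjoint (chain P D N a s k) (chain P D N a t l) := by
  have hmem := chain_mem hD hP ha t l
  rw [show t + l + 1 = s + k + 1 by omega] at hmem
  refine hD.disjoint_of_ne (chain_mem hD hP ha s k) hmem ?_
  rcases Nat.lt_or_gt_of_ne hst with hlt | hlt
  · obtain ⟨d, rfl⟩ : ∃ d, t = s + 1 + d := ⟨t - s - 1, by omega⟩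
    obtain rfl : k = d + 1 + l := by omega
    exact chain_ne_of_lt hD hP ha s d l
  · obtain ⟨d, rfl⟩ : ∃ d, s = t + 1 + d := ⟨s - t - 1, by omega⟩
    obtain rfl : l = d + 1 + k := by omega
    exact (chain_ne_of_lt hD hP ha t d k).symm

end Chain

end Construction

section Martingale

variable [MeasurableSpace Ω] {P : Measure Ω} {D : ℕ → Finset (Set Ω)} {N : ℕ}
  {a : ℕ → Set Ω} {ε : ℕ → ℝ}

/-- Time `i` serves the requirement `owner i`; each requirement is served at infinitely many
times. -/
def owner (i : ℕ) : ℕ := i.unpair.1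

variable (P D N) in
def increment (a : ℕ → Set Ω) (ε : ℕ → ℝ) (i : ℕ) (w : Ω) : ℝ :=
  ε (owner i) * bump P (chain P D N a (owner i) i) (chain P D N a (owner i) (i + 1)) w

variable (P D N) in
def mart (a : ℕ → Set Ω) (ε : ℕ → ℝ) : ℕ → Set Ω → ℝ :=
  incrementMart P D (increment P D N a ε)

variable [IsProbabilityMeasure P] (hD : IsPartitionSeq D) (hP : AssumptionA P D)
  (ha : ∀ t, a t ∈ D (level D N t)) (hε : ∀ t, ε t = 1 ∨ ε t = -1)
include hD hP ha hε

lemma isCenteredBump_increment (i : ℕ) :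
    IsCenteredBump P D (level D N (owner i + i + 1)) (chain P D N a (owner i) i)
      (increment P D N a ε i) :=
  isCenteredBump_const_mul_bump hD (chain_mem hD hP ha _ i)
    (hD.measurableSet (chain_mem hD hP ha _ (i + 1))) (chain_succ_spec hD hP ha _ i).1
    (chain_succ_spec hD hP ha _ i).2 (by rcases hε (owner i) with h | h <;> simp [h])

lemma isMart_mart : IsMart P D (mart P D N a ε) :=
  isMart_incrementMart hD (isCenteredBump_increment hD hP ha hε) fun i => by
    have := add_lt_level (N := N) hD hP (owner i + i + 1)
    omega

lemma mart_eq_zero {n : ℕ} (hn : n ≤ N) (A : Set Ω) : mart P D N a ε n A = 0 :=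
  incrementMart_eq_zero hD (isCenteredBump_increment hD hP ha hε) (fun i _ => by
    have := add_lt_level (N := N) hD hP (owner i + i + 1)
    omega) A

lemma martNorm_mart_ne_top {p : ℝ≥0∞} (hp : 1 ≤ p) (hp' : p ≠ ∞) :
    martNorm P D p (mart P D N a ε) ≠ ∞ := by
  refine ne_top_of_le_ne_top ?_
    (martNorm_incrementMart_le hD (isCenteredBump_increment hD hP ha hε) hp hp')
  have hp0 : 0 < 1 / p.toReal :=
    one_div_pos.2 (ENNReal.toReal_pos (zero_lt_one.trans_le hp).ne' hp')
  have hr : (2⁻¹ : ℝ≥0∞) ^ (1 / p.toReal) < 1 := ENNReal.rpow_lt_one (by norm_num) hp0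
  have hle : ∀ i, P (chain P D N a (owner i) i) ^ (1 / p.toReal) ≤
      ((2⁻¹ : ℝ≥0∞) ^ (1 / p.toReal)) ^ i := fun i => by
    rw [← ENNReal.rpow_natCast, ← ENNReal.rpow_mul, mul_comm, ENNReal.rpow_mul,
      ENNReal.rpow_natCast]
    exact ENNReal.rpow_le_rpow (measure_chain_le hD hP ha _ i) hp0.le
  refine ne_top_of_le_ne_top ?_ (ENNReal.tsum_le_tsum hle)
  rw [ENNReal.tsum_geometric]
  exact ENNReal.inv_ne_top.2 (tsub_pos_iff_lt.2 hr).ne'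

end Martingale

section Divergence

variable [MeasurableSpace Ω] {P : Measure Ω} {D : ℕ → Finset (Set Ω)} {N t n : ℕ}

variable (D N) in
/-- At these times `i` the atom of level `n` met by the chain of `t` lies inside the atom where
the `i`-th increment equals `ε t`. -/
def servedTimes (t n : ℕ) : Finset ℕ :=
  (Finset.range n).filter fun i => t < i ∧ owner i = t ∧ level D N (t + i + 2) ≤ n

lemma le_card_servedTimes (hD : IsPartitionSeq D) (hP : AssumptionA P D) (M : ℕ)
    (hn : level D N (t + Nat.pair t (t + 1 + M) + 2) ≤ n) : M ≤ (servedTimes D N t n).card := by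
  have hmaps : ∀ k ∈ Finset.range M, Nat.pair t (t + 1 + k) ∈ servedTimes D N t n := by
    intro k hk
    have hlt : Nat.pair t (t + 1 + k) < Nat.pair t (t + 1 + M) :=
      Nat.pair_lt_pair_right t (by simpa using hk)
    have hlev : level D N (t + Nat.pair t (t + 1 + k) + 2) ≤ n :=
      ((strictMono_level hD hP).monotone (by omega)).trans hn
    have := add_lt_level (N := N) hD hP (t + Nat.pair t (t + 1 + k) + 2)
    have := Nat.right_le_pair t (t + 1 + k)
    exact Finset.mem_filter.2 ⟨Finset.mem_range.2 (by omega), by omega, by simp [owner], hlev⟩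
  simpa using Finset.card_le_card_of_injOn _ hmaps fun k _ l _ h => by
    simpa using Nat.pair_eq_pair.1 h

lemma tendsto_card_servedTimes (hD : IsPartitionSeq D) (hP : AssumptionA P D) (t : ℕ) :
    Tendsto (fun n => (servedTimes D N t n).card) atTop atTop :=
  tendsto_atTop_atTop.2 fun M => ⟨_, fun _ hn => le_card_servedTimes hD hP M hn⟩

variable [IsProbabilityMeasure P] {a : ℕ → Set Ω} {ε : ℕ → ℝ} (hD : IsPartitionSeq D)
  (hP : AssumptionA P D) (ha : ∀ t, a t ∈ D (level D N t)) (hε : ∀ t, ε t = 1 ∨ ε t = -1)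
  {y : Kt D} (hy : ∀ n k, (n ≤ level D N (t + k + 1) → chain P D N a t k ⊆ y.1 n) ∧
    (level D N (t + k + 1) ≤ n → y.1 n ⊆ chain P D N a t k))
include hD hP ha hε hy

lemma setIntegral_increment_eq_zero {i : ℕ} (hti : t < i) (hown : owner i ≠ t) (n : ℕ) :
    ∫ w in y.1 n, increment P D N a ε i w ∂P = 0 := by
  have hbump := isCenteredBump_increment hD hP ha hε i
  rcases le_total n (level D N (owner i + i + 1)) with h | h
  · exact hbump.setIntegral_eq_zero_of_le hD (y.2.1 n) h
  · have hsub : y.1 n ⊆ chain P D N a t (owner i + i - t) :=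
      (hy n _).2 (by rwa [show t + (owner i + i - t) + 1 = owner i + i + 1 by omega])
    exact hbump.setIntegral_eq_zero_of_disjoint
      ((disjoint_chain hD hP ha hown (by omega)).mono_right hsub).symm

lemma mul_setIntegral_increment_of_owner_eq {i : ℕ} (hown : owner i = t) (n : ℕ) :
    0 ≤ ε t * ∫ w in y.1 n, increment P D N a ε i w ∂P ∧
      (level D N (t + i + 2) ≤ n →
        ε t * ∫ w in y.1 n, increment P D N a ε i w ∂P = P.real (y.1 n)) := by
  have hS := hD.measurableSet (chain_mem hD hP ha t i)
  have hT := hD.measurableSet (chain_mem hD hP ha t (i + 1))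
  have hεε : ε t * ε t = 1 := by rcases hε t with h | h <;> simp [h]
  have hint : ε t * ∫ w in y.1 n, increment P D N a ε i w ∂P =
      ∫ w in y.1 n, bump P (chain P D N a t i) (chain P D N a t (i + 1)) w ∂P := by
    simp only [increment, hown]
    rw [integral_const_mul, ← mul_assoc, hεε, one_mul]
  rw [hint]
  by_cases h : level D N (t + i + 2) ≤ n
  · have hsub : y.1 n ⊆ chain P D N a t (i + 1) := (hy n (i + 1)).2 h
    rw [setIntegral_bump_of_subset hS hT hsub]
    exact ⟨measureReal_nonneg, fun _ => rfl⟩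
  · refine ⟨setIntegral_bump_nonneg hS hT ((hy n (i + 1)).1 (not_le.1 h).le)
      (chain_succ_spec hD hP ha t i).2, fun h' => absurd h' h⟩

lemma mul_setAverage_increment_nonneg {i : ℕ} (hti : t < i) (n : ℕ) :
    0 ≤ ε t * ⨍ w in y.1 n, increment P D N a ε i w ∂P := by
  rw [setAverage_eq, smul_eq_mul, mul_left_comm]
  refine mul_nonneg (inv_nonneg.2 measureReal_nonneg) ?_
  by_cases hown : owner i = t
  · exact (mul_setIntegral_increment_of_owner_eq hD hP ha hε hy hown n).1
  · rw [setIntegral_increment_eq_zero hD hP ha hε hy hti hown n, mul_zero]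

lemma mul_setAverage_increment_eq_one {i : ℕ} (hi : i ∈ servedTimes D N t n) :
    ε t * ⨍ w in y.1 n, increment P D N a ε i w ∂P = 1 := by
  obtain ⟨-, -, hown, hlev⟩ := Finset.mem_filter.1 hi
  rw [setAverage_eq, smul_eq_mul, mul_left_comm,
    (mul_setIntegral_increment_of_owner_eq hD hP ha hε hy hown n).2 hlev]
  exact inv_mul_cancel₀ (ENNReal.toReal_pos (hP.1 n _ (y.2.1 n)).ne' (measure_ne_top P _)).ne'

lemma card_servedTimes_sub_le (n : ℕ) :
    ((servedTimes D N t n).card : ℝ) - (t + 1) ≤ ε t * mart P D N a ε n (y.1 n) := by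
  rw [mart, incrementMart, if_pos (y.2.1 n), Finset.mul_sum,
    ← Finset.sum_filter_add_sum_filter_not _ (· ≤ t)]
  have hearly : -((t : ℝ) + 1) ≤ ∑ i ∈ (Finset.range n).filter (· ≤ t),
      ε t * ⨍ w in y.1 n, increment P D N a ε i w ∂P := by
    have hcard : ((Finset.range n).filter (· ≤ t)).card ≤ (Finset.range (t + 1)).card :=
      Finset.card_le_card fun i hi =>
        Finset.mem_range.2 (Nat.lt_succ_of_le (Finset.mem_filter.1 hi).2)
    have hterm : ∀ i, -1 ≤ ε t * ⨍ w in y.1 n, increment P D N a ε i w ∂P := fun i => by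
      refine (abs_le.1 ?_).1
      rw [abs_mul]
      rcases hε t with h | h <;>
        simpa [h] using (isCenteredBump_increment hD hP ha hε i).abs_setAverage_le_one (y.1 n)
    calc -((t : ℝ) + 1) ≤ ∑ i ∈ (Finset.range n).filter (· ≤ t), (-1 : ℝ) := by
          simpa using (by exact_mod_cast hcard : (_ : ℝ) ≤ (Finset.range (t + 1)).card)
      _ ≤ _ := Finset.sum_le_sum fun i _ => hterm i
  have hlate : ((servedTimes D N t n).card : ℝ) ≤ ∑ i ∈ (Finset.range n).filter (¬· ≤ t),
      ε t * ⨍ w in y.1 n, increment P D N a ε i w ∂P := by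
    rw [Finset.card_eq_sum_ones, Nat.cast_sum, Nat.cast_one,
      ← Finset.sum_congr rfl fun i hi => mul_setAverage_increment_eq_one hD hP ha hε hy hi]
    refine Finset.sum_le_sum_of_subset_of_nonneg (fun i hi => ?_) fun i hi _ => ?_
    · obtain ⟨hin, hti, -⟩ := Finset.mem_filter.1 hi
      exact Finset.mem_filter.2 ⟨hin, not_le.2 hti⟩
    · exact mul_setAverage_increment_nonneg hD hP ha hε hy
        (not_le.1 (Finset.mem_filter.1 hi).2) n
  linarith

lemma tendsto_mul_mart :
    Tendsto (fun n => ε t * mart P D N a ε n (y.1 n)) atTop atTop :=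
  tendsto_atTop_mono (card_servedTimes_sub_le hD hP ha hε hy) <|
    tendsto_atTop_add_const_right _ _ <|
      tendsto_natCast_atTop_atTop.comp (tendsto_card_servedTimes hD hP t)

end Divergence

section Main

variable [MeasurableSpace Ω] {P : Measure Ω} {D : ℕ → Finset (Set Ω)}

lemma exists_kt_tendsto_mul_mart [IsProbabilityMeasure P] {N : ℕ} {a : ℕ → Set Ω} {ε : ℕ → ℝ}
    (hD : IsPartitionSeq D) (hP : AssumptionA P D) (ha : ∀ t, a t ∈ D (level D N t))
    (hε : ∀ t, ε t = 1 ∨ ε t = -1) (t : ℕ) :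
    ∃ y : Kt D, (∀ m ≤ level D N t, ∀ B ∈ D m, a t ⊆ B → y.1 m = B) ∧
      Tendsto (fun n => ε t * mart P D N a ε n (y.1 n)) atTop atTop := by
  obtain ⟨y, hy⟩ := exists_kt_of_antitone hD (chain_mem hD hP ha t) (antitone_chain hD hP ha t)
    fun k => by have := add_lt_level (N := N) hD hP (t + k + 1); omega
  refine ⟨y, fun m hm B hB hB' => ?_, tendsto_mul_mart hD hP ha hε hy⟩
  have hm' : m ≤ level D N (t + 0 + 1) := hm.trans ((strictMono_level hD hP).monotone (by omega))
  exact hD.eq_of_subset_of_subset (y.2.1 m) hB rfl (hD.nonempty (chain_mem hD hP ha t 0))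
    ((hy m 0).1 hm') ((chain_zero_spec hD hP ha t).2.1.trans hB')

lemma exists_seeds [Nonempty Ω] (hD : IsPartitionSeq D) {ℓ : ℕ → ℕ} (hℓ : ∀ t, t ≤ ℓ t) :
    ∃ (a : ℕ → Set Ω) (ε : ℕ → ℝ), (∀ t, a t ∈ D (ℓ t)) ∧ (∀ t, ε t = 1 ∨ ε t = -1) ∧
      ∀ m, ∀ B ∈ D m, ∀ s : ℝ, (s = 1 ∨ s = -1) → ∃ t, m ≤ ℓ t ∧ a t ⊆ B ∧ ε t = s := by
  have : Nonempty (Σ m, {B // B ∈ D m}) :=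
    ⟨⟨0, _, (hD.exists_mem 0 (Classical.arbitrary Ω)).choose_spec.1⟩⟩
  -- requirement `t` is `e t.unpair.1`, so every requirement recurs at arbitrarily large `t`
  obtain ⟨e, he⟩ := exists_surjective_nat ((Σ m, {B // B ∈ D m}) × Bool)
  have hseed : ∀ t, ∃ A ∈ D (ℓ t), (e t.unpair.1).1.1 ≤ ℓ t → A ⊆ (e t.unpair.1).1.2.1 := by
    intro t
    by_cases h : (e t.unpair.1).1.1 ≤ ℓ t
    · obtain ⟨A, hA, hAB⟩ := hD.exists_subset h (e t.unpair.1).1.2.2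
      exact ⟨A, hA, fun _ => hAB⟩
    · obtain ⟨A, hA, -⟩ := hD.exists_mem (ℓ t) (Classical.arbitrary Ω)
      exact ⟨A, hA, fun h' => absurd h' h⟩
  choose a ha haB using hseed
  refine ⟨a, fun t => if (e t.unpair.1).2 then 1 else -1, ha,
    fun t => by dsimp only; split <;> simp, fun m B hB s hs => ?_⟩
  obtain ⟨j, hj⟩ := he (⟨m, B, hB⟩, decide (s = 1))
  have hm : m ≤ ℓ (Nat.pair j m) := (Nat.right_le_pair j m).trans (hℓ _)
  refine ⟨Nat.pair j m, hm, ?_, ?_⟩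
  · have := haB (Nat.pair j m)
    rw [Nat.unpair_pair, hj] at this
    exact this hm
  · simp only [Nat.unpair_pair, hj]
    rcases hs with rfl | rfl <;> norm_num

end Main

/-- Lemma (l:ui): given `N`, there is a martingale `f` adapted to the filtration with
(a) `f_1 = … = f_N = 0`, (b) `f` is `L^p`-bounded for every `p ∈ [1,∞)`,
(c) `lim f_n(x) = +∞` on a dense subset of `K` and (d) `lim f_n(x) = -∞` on a dense
subset of `K`. -/
theorem statement16 [MeasurableSpace Ω] (P : Measure Ω) [IsProbabilityMeasure P]
    (D : ℕ → Finset (Set Ω)) (hpart : IsPartitionSeq D) (hA : AssumptionA P D) (N : ℕ) :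
    ∃ f : ℕ → Set Ω → ℝ, IsMart P D f ∧
      (∀ n ≤ N, ∀ A : Set Ω, f n A = 0) ∧
      (∀ p : ℝ≥0∞, 1 ≤ p → p ≠ ∞ → martNorm P D p f ≠ ∞) ∧
      Dense {x : Kt D | Filter.Tendsto (fun n => f n (x.1 n)) Filter.atTop Filter.atTop} ∧
      Dense {x : Kt D | Filter.Tendsto (fun n => f n (x.1 n)) Filter.atTop Filter.atBot} := by
  have := nonempty_of_isProbabilityMeasure P
  obtain ⟨a, ε, ha, hε, hcover⟩ := exists_seeds hpart fun t =>
    (le_add_right le_rfl).trans (add_lt_level (N := N) hpart hA t).le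
  have hdense : ∀ s : ℝ, (s = 1 ∨ s = -1) → Dense {x : Kt D |
      Tendsto (fun n => s * mart P D N a ε n (x.1 n)) atTop atTop} := fun s hs =>
    dense_of_forall_exists_eq hpart fun x m => by
      obtain ⟨t, hmt, hat, rfl⟩ := hcover m (x.1 m) (x.2.1 m) s hs
      obtain ⟨y, hyx, hy⟩ := exists_kt_tendsto_mul_mart hpart hA ha hε t
      exact ⟨y, hy, hyx m hmt _ (x.2.1 m) hat⟩
  refine ⟨mart P D N a ε, isMart_mart hpart hA ha hε, fun n hn => mart_eq_zero hpart hA ha hε hn,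
    fun p hp hp' => martNorm_mart_ne_top hpart hA ha hε hp hp', ?_, ?_⟩
  · simpa using hdense 1 (Or.inl rfl)
  · simpa [tendsto_neg_atTop_iff] using hdense (-1) (Or.inr rfl)

end MartingalePaper
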